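/- arXiv:1801.09419 — 8 statements merged into one kernel-verified Lean document; each statement's English description precedes it below -/
import Mathlib

section
/- Let q⋆ be an optimal k-points NN quantizer for P with codebook c⋆ = {c⋆₁,…,c⋆_k} and let q be any k-points NN quantizer. Then 𝐅(q⋆,q)² ≤ F₁(q⋆,q)² + p⋆(F₁(q⋆,q))·(M + F₁(q⋆,q))², where M = max_{i≠j} |c⋆_i − c⋆_j|. -/
open MeasureTheory Metric Set ENNReal

noncomputable section

variable {E : Type*} [NormedAddCommGroup E] [InnerProductSpace ℝ E] [MeasurableSpace E]

/-- A `k`-points nearest-neighbor quantizer: a Borel-measurable map whose image is a set of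
exactly `k` points and which maps every point to a nearest point of its codebook. -/
def IsNNQuantizer (k : ℕ) (q : E → E) : Prop :=
  Measurable q ∧ (∃ s : Finset E, s.card = k ∧ Set.range q = ↑s) ∧
    ∀ x : E, ∀ c ∈ Set.range q, ‖x - q x‖ ≤ ‖x - c‖

/-- The risk (distortion) of a quantizer with respect to `P`. -/
def risk (P : Measure E) (q : E → E) : ℝ := ∫ x, ‖x - q x‖ ^ 2 ∂P

/-- An optimal `k`-points NN quantizer for `P`. -/
def IsOptimalQuantizer (P : Measure E) (k : ℕ) (q : E → E) : Prop :=
  IsNNQuantizer k q ∧ ∀ q', IsNNQuantizer k q' → risk P q ≤ risk P q'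

/-- The absolute margin condition with parameter `l0` (with respect to the optimal quantizer
`qs`):  (1) the set `A(l0)` has full `P`-measure; (2) for every random variable `Y`
(encoded by a coupling `π` of the law `P` of `X` and the law of `Y`) with
`E|X - Y|² ≤ l0² E|X - qs X|²`, the map `q ↦ E|Y - q Y|²` over `k`-points NN quantizers has a
unique minimizer (uniqueness of its codebook). -/
def AbsoluteMargin (P : Measure E) (k : ℕ) (qs : E → E) (l0 : ℝ) : Prop :=
  P {x | qs (x + l0 • (x - qs x)) = qs x} = 1 ∧
  ∀ π : Measure (E × E), IsProbabilityMeasure π → π.map Prod.fst = P →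
    (∫ p, ‖p.1 - p.2‖ ^ 2 ∂π) ≤ l0 ^ 2 * ∫ x, ‖x - qs x‖ ^ 2 ∂P →
    ∃ q0, IsNNQuantizer k q0 ∧
      (∀ q', IsNNQuantizer k q' → risk (π.map Prod.snd) q0 ≤ risk (π.map Prod.snd) q') ∧
      ∀ q', IsNNQuantizer k q' →
        (∀ q'', IsNNQuantizer k q'' → risk (π.map Prod.snd) q' ≤ risk (π.map Prod.snd) q'') →
        Set.range q' = Set.range q0

/-- Voronoi cell of the `j`-th point of the codebook `c`. -/
def Vcell (k : ℕ) (c : Fin k → E) (j : Fin k) : Set E := {x | ∀ l, ‖x - c j‖ ≤ ‖x - c l‖}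

/-- The frontier of the Voronoi diagram generated by `c`. -/
def VorFrontier (k : ℕ) (c : Fin k → E) : Set E :=
  ⋃ (i) (j) (_ : i ≠ j), Vcell k c i ∩ Vcell k c j

/-- `F₁` between two codebooks: min over permutations of the max distance of matched centers. -/
def F1 (k : ℕ) (c c' : Fin k → E) : ℝ :=
  ⨅ σ : Equiv.Perm (Fin k), ⨆ j, ‖c j - c' (σ j)‖

/-- `F₂` between two codebooks: the minimal `P`-mass of misclassified points. -/
def F2 (P : Measure E) (k : ℕ) (c c' : Fin k → E) : ℝ :=
  ⨅ σ : Equiv.Perm (Fin k), (P (⋃ j, Vcell k c j ∩ Vcell k c' (σ j))ᶜ).toReal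

/-- `max_{i ≠ j} ‖c i - c j‖`. -/
def maxDist (k : ℕ) (c : Fin k → E) : ℝ :=
  ⨆ p : {p : Fin k × Fin k // p.1 ≠ p.2}, ‖c p.1.1 - c p.1.2‖

/-- `min_{i ≠ j} ‖c i - c j‖`. -/
def minDist (k : ℕ) (c : Fin k → E) : ℝ :=
  ⨅ p : {p : Fin k × Fin k // p.1 ≠ p.2}, ‖c p.1.1 - c p.1.2‖

/-- The function `p⋆(t)` of Definition `def:pstar`, for the optimal codebook `cs` of the
optimal quantizer `qs`. -/
def pstar (P : Measure E) (k : ℕ) (cs : Fin k → E) (qs : E → E) (t : ℝ) : ℝ :=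
  (P (⋃ i, {x | minDist k cs * infDist x (frontier (Vcell k cs i)) ≤
      2 * ‖x - qs x‖ * t + 2 * t ^ 2})).toReal

/-- `F₁` between two quantizers, defined through enumerations of their codebooks. -/
def F1Q (k : ℕ) (q q' : E → E) : ℝ :=
  sInf {r | ∃ c c' : Fin k → E, Set.range c = Set.range q ∧ Set.range c' = Set.range q' ∧
    r = ⨆ j, ‖c j - c' j‖}

/-! Match the codebooks by a permutation `σ` realising `t = F₁(c⋆, c)`. By the triangle
inequality `‖q x - q⋆ x‖ ≤ M + t` everywhere. If `x` lies in the cell of `c⋆ᵢ` at distance `D`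
from its frontier, the bisector of `c⋆ᵢ` and `c⋆ⱼ` is at distance at least `D` from `x`, so
`‖x - c⋆ⱼ‖² - ‖x - c⋆ᵢ‖² ≥ 2 ‖c⋆ᵢ - c⋆ⱼ‖ D ≥ 2 m D`. Outside the set measured by `p⋆(t)` this
gives `‖x - c⋆ⱼ‖ > ‖x - c⋆ᵢ‖ + 2t` for all `j ≠ i`, so the nearest point of `c` to `x` is
`c (σ i)` and `‖q x - q⋆ x‖ ≤ t`. Integrating the two bounds gives the claim. -/

section Normed

variable {F : Type*} [NormedAddCommGroup F] [NormedSpace ℝ F]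

theorem infDist_frontier_le_dist_of_mem_of_notMem {S : Set F} {x y : F} (hx : x ∈ S)
    (hy : y ∉ S) : infDist x (frontier S) ≤ dist x y := by
  let f : unitInterval → F := fun θ => AffineMap.lineMap x y (θ : ℝ)
  have hf : Continuous f := by fun_prop
  obtain ⟨θ, hθ⟩ : (frontier (f ⁻¹' S)).Nonempty := by
    refine nonempty_frontier_iff.2 ⟨⟨0, by simpa [f] using hx⟩, fun h => hy ?_⟩
    have h1 : (1 : unitInterval) ∈ f ⁻¹' S := h ▸ mem_univ _
    simpa [f] using h1
  calc infDist x (frontier S) ≤ dist x (f θ) :=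
        infDist_le_dist_of_mem (hf.frontier_preimage_subset S hθ)
    _ = θ * dist x y := by simp [f, dist_left_lineMap, abs_of_nonneg θ.2.1]
    _ ≤ dist x y := mul_le_of_le_one_left dist_nonneg θ.2.2

end Normed

section Codebook

variable {G : Type*} [NormedAddCommGroup G] {k : ℕ}

theorem exists_perm_forall_norm_sub_le_F1 (c c' : Fin k → G) :
    ∃ σ : Equiv.Perm (Fin k), ∀ j, ‖c j - c' (σ j)‖ ≤ F1 k c c' := by
  obtain ⟨σ, hσ⟩ := Finite.exists_min fun σ : Equiv.Perm (Fin k) => ⨆ j, ‖c j - c' (σ j)‖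
  exact ⟨σ, fun j => (le_ciSup (Finite.bddAbove_range _) j).trans (le_ciInf hσ)⟩

theorem norm_sub_le_maxDist (c : Fin k → G) (i j : Fin k) : ‖c i - c j‖ ≤ maxDist k c := by
  rcases eq_or_ne i j with rfl | hij
  · rw [sub_self, norm_zero]
    exact Real.iSup_nonneg fun _ => norm_nonneg _
  · exact le_ciSup (f := fun p : {p : Fin k × Fin k // p.1 ≠ p.2} => ‖c p.1.1 - c p.1.2‖)
      (Finite.bddAbove_range _) ⟨(i, j), hij⟩

theorem minDist_le_norm_sub (c : Fin k → G) {i j : Fin k} (hij : i ≠ j) :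
    minDist k c ≤ ‖c i - c j‖ :=
  ciInf_le (f := fun p : {p : Fin k × Fin k // p.1 ≠ p.2} => ‖c p.1.1 - c p.1.2‖)
    (Finite.bddBelow_range _) ⟨(i, j), hij⟩

theorem eq_of_norm_sub_le_of_forall_add_two_mul_lt {ι : Type*} {a b : ι → G} {x : G} {t : ℝ}
    {i j : ι} (hab : ∀ l, ‖a l - b l‖ ≤ t) (hmargin : ∀ l ≠ i, ‖x - a i‖ + 2 * t < ‖x - a l‖)
    (hj : ‖x - b j‖ ≤ ‖x - b i‖) : j = i := by
  by_contra hji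
  have hbj := hab j
  rw [norm_sub_rev] at hbj
  linarith [hmargin j hji, hab i, norm_sub_le_norm_sub_add_norm_sub x (b j) (a j),
    norm_sub_le_norm_sub_add_norm_sub x (a i) (b i)]

variable [MeasurableSpace G] {q : G → G} {c : Fin k → G}

theorem IsNNQuantizer.norm_sub_le (hq : IsNNQuantizer k q) (hc : range q = range c) (x : G)
    (j : Fin k) : ‖x - q x‖ ≤ ‖x - c j‖ :=
  hq.2.2 x (c j) (hc ▸ mem_range_self j)

theorem IsNNQuantizer.exists_eq_mem_Vcell (hq : IsNNQuantizer k q) (hc : range q = range c)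
    (x : G) : ∃ i, q x = c i ∧ x ∈ Vcell k c i := by
  obtain ⟨i, hi⟩ : q x ∈ range c := hc ▸ mem_range_self x
  exact ⟨i, hi.symm, fun l => hi ▸ hq.norm_sub_le hc x l⟩

end Codebook

section InnerProduct

variable {F : Type*} [NormedAddCommGroup F] [InnerProductSpace ℝ F]

theorem norm_add_sub_sq_sub_norm_add_sub_sq (x w a b : F) :
    ‖x + w - a‖ ^ 2 - ‖x + w - b‖ ^ 2 =
      ‖x - a‖ ^ 2 - ‖x - b‖ ^ 2 + 2 * inner ℝ (b - a) w := by
  have hba : b - a = (x - a) - (x - b) := (_root_.sub_sub_sub_cancel_left a b x).symm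
  rw [add_sub_right_comm, add_sub_right_comm x w b, norm_add_sq_real, norm_add_sq_real, hba,
    inner_sub_left (x - a) (x - b) w]
  ring

theorem two_mul_norm_sub_mul_infDist_frontier_le {a b x : F} {S : Set F} (hx : x ∈ S)
    (hS : ∀ y ∈ S, ‖y - a‖ ≤ ‖y - b‖) :
    2 * ‖a - b‖ * infDist x (frontier S) ≤ ‖x - b‖ ^ 2 - ‖x - a‖ ^ 2 := by
  rcases eq_or_ne a b with rfl | hab
  · simp
  set d := ‖b - a‖ with hd_def
  have hd : 0 < d := norm_pos_iff.2 (sub_ne_zero.2 hab.symm)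
  set u := d⁻¹ • (b - a)
  -- `s` is the distance from `x` to the bisector of `a` and `b`, which bounds `S`
  set s := (‖x - b‖ ^ 2 - ‖x - a‖ ^ 2) / (2 * d)
  have hs : 2 * d * s = ‖x - b‖ ^ 2 - ‖x - a‖ ^ 2 := mul_div_cancel₀ _ (by positivity)
  have hs0 : 0 ≤ s := by
    have := pow_le_pow_left₀ (norm_nonneg _) (hS x hx) 2
    positivity
  have hinner : ∀ r : ℝ, inner ℝ (b - a) (r • u) = r * d := fun r => by
    rw [real_inner_smul_right, real_inner_smul_right, real_inner_self_eq_norm_sq, ← hd_def]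
    field_simp
  have hinf : infDist x (frontier S) ≤ s := by
    refine le_of_forall_pos_le_add fun ε hε => ?_
    have hy : x + (s + ε) • u ∉ S := fun hy => by
      have hsq := pow_le_pow_left₀ (norm_nonneg _) (hS _ hy) 2
      have := norm_add_sub_sq_sub_norm_add_sub_sq x ((s + ε) • u) a b
      rw [hinner] at this
      nlinarith
    calc infDist x (frontier S) ≤ dist x (x + (s + ε) • u) :=
          infDist_frontier_le_dist_of_mem_of_notMem hx hy
      _ = s + ε := by
        rw [dist_self_add_right, norm_smul, norm_smul, Real.norm_of_nonneg (by positivity),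
          Real.norm_of_nonneg (by positivity), inv_mul_cancel₀ hd.ne', mul_one]
  calc 2 * ‖a - b‖ * infDist x (frontier S) ≤ 2 * d * s := by
        rw [norm_sub_rev]; gcongr
    _ = ‖x - b‖ ^ 2 - ‖x - a‖ ^ 2 := hs

theorem norm_sub_add_two_mul_lt_of_lt_minDist_mul_infDist {k : ℕ} {c : Fin k → F} {x : F}
    {i : Fin k} {t : ℝ} (hx : x ∈ Vcell k c i)
    (h : 2 * ‖x - c i‖ * t + 2 * t ^ 2 < minDist k c * infDist x (frontier (Vcell k c i)))
    {j : Fin k} (hji : j ≠ i) : ‖x - c i‖ + 2 * t < ‖x - c j‖ := by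
  have hgeom := two_mul_norm_sub_mul_infDist_frontier_le (b := c j) hx fun y hy => hy j
  have hmin := mul_le_mul_of_nonneg_right (minDist_le_norm_sub c hji.symm)
    (infDist_nonneg (x := x) (s := frontier (Vcell k c i)))
  refine lt_of_pow_lt_pow_left₀ 2 (norm_nonneg _) ?_
  nlinarith

end InnerProduct

theorem integral_le_add_measureReal_mul {α : Type*} [MeasurableSpace α] {P : Measure α}
    [IsProbabilityMeasure P] {f : α → ℝ} {B : Set α} {a b : ℝ}
    (hf0 : ∀ x, 0 ≤ f x) (hf : ∀ x, f x ≤ a + b) (hfB : ∀ x ∉ B, f x ≤ a) :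
    ∫ x, f x ∂P ≤ a + (P B).toReal * b := by
  -- `B` need not be measurable: bound `f` on a measurable hull of `B` of the same measure
  set B' := toMeasurable P B
  have hB' : MeasurableSet B' := measurableSet_toMeasurable P B
  have hbound : ∀ x, f x ≤ a + B'.indicator (fun _ => b) x := fun x => by
    by_cases hx : x ∈ B'
    · simpa [indicator_of_mem hx] using hf x
    · simpa [indicator_of_notMem hx] using hfB x fun hxB => hx (subset_toMeasurable P B hxB)
  calc ∫ x, f x ∂P ≤ ∫ x, a + B'.indicator (fun _ => b) x ∂P :=
        integral_mono_of_nonneg (ae_of_all _ hf0)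
          ((integrable_const a).add ((integrable_const b).indicator hB')) (ae_of_all _ hbound)
    _ = a + (P B).toReal * b := by
        rw [integral_add (integrable_const a) ((integrable_const b).indicator hB'),
          integral_indicator_const b hB', measureReal_def, measure_toMeasurable]
        simp

theorem stmt2_general
    (P : Measure E) [IsProbabilityMeasure P] (k : ℕ)
    (qs q : E → E) (cs c : Fin k → E)
    (hcs_range : Set.range qs = Set.range cs) (hc_range : Set.range q = Set.range c)
    (hqs : IsOptimalQuantizer P k qs) (hq : IsNNQuantizer k q) :
    ∫ x, ‖q x - qs x‖ ^ 2 ∂P ≤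
      F1 k cs c ^ 2 + pstar P k cs qs (F1 k cs c) * (maxDist k cs + F1 k cs c) ^ 2 := by
  set t := F1 k cs c
  obtain ⟨σ, hσ⟩ := exists_perm_forall_norm_sub_le_F1 cs c
  have hqσ : ∀ x, ∃ j, c (σ j) = q x := fun x => by
    obtain ⟨l, hl⟩ : q x ∈ range c := hc_range ▸ mem_range_self x
    exact ⟨σ.symm l, by simpa using hl⟩
  have hfar : ∀ x, ‖q x - qs x‖ ≤ maxDist k cs + t := fun x => by
    obtain ⟨i, hi, -⟩ := hqs.1.exists_eq_mem_Vcell hcs_range x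
    obtain ⟨j, hj⟩ := hqσ x
    calc ‖q x - qs x‖ = ‖(cs j - cs i) - (cs j - c (σ j))‖ := by
          rw [hi, ← hj, _root_.sub_sub_sub_cancel_left]
      _ ≤ maxDist k cs + t := norm_sub_le_of_le (norm_sub_le_maxDist cs j i) (hσ j)
  refine integral_le_add_measureReal_mul (fun _ => by positivity)
    (fun x => by nlinarith [hfar x, norm_nonneg (q x - qs x)]) fun x hx => ?_
  simp only [mem_iUnion, mem_ofPred_eq, not_exists, not_le] at hx
  obtain ⟨i, hi, hxi⟩ := hqs.1.exists_eq_mem_Vcell hcs_range x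
  obtain ⟨j, hj⟩ := hqσ x
  have hji : j = i := eq_of_norm_sub_le_of_forall_add_two_mul_lt hσ
    (fun l => norm_sub_add_two_mul_lt_of_lt_minDist_mul_infDist hxi (hi ▸ hx i))
    (hj ▸ hq.norm_sub_le hc_range x (σ i))
  rw [← hj, hi, hji, norm_sub_rev]
  exact pow_le_pow_left₀ (norm_nonneg _) (hσ i) 2

/-- comparison of `𝐅` with `F₁` via `p⋆` (Proposition `thm:pstar`). -/
theorem stmt2 [BorelSpace E] [CompleteSpace E] [SecondCountableTopology E]
    (P : Measure E) [IsProbabilityMeasure P] (k : ℕ) (hk : 1 ≤ k)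
    (hmom : Integrable (fun x => ‖x‖ ^ 2) P)
    (hsupp : ∀ s : Finset E, s.card ≤ k → P (↑s : Set E) < 1)
    (qs q : E → E) (cs c : Fin k → E)
    (hcs_inj : Function.Injective cs) (hc_inj : Function.Injective c)
    (hcs_range : Set.range qs = Set.range cs) (hc_range : Set.range q = Set.range c)
    (hqs : IsOptimalQuantizer P k qs) (hq : IsNNQuantizer k q) :
    ∫ x, ‖q x - qs x‖ ^ 2 ∂P ≤
      F1 k cs c ^ 2 + pstar P k cs qs (F1 k cs c) * (maxDist k cs + F1 k cs c) ^ 2 :=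
  stmt2_general P k qs q cs c hcs_range hc_range hqs hq
end
end

section
/- Let A = {a₁,…,a_k} and B = {b₁,…,b_k} be two sets of k points in a metric space (E,d). If d_H(A,B) < (1/2)·min_{i≠j} d(a_i, a_j), then d_H(A,B) = min_σ max_{1≤j≤k} d(a_j, b_{σ(j)}), where the minimum is over all permutations σ of {1,…,k}. -/
open Metric Set

/-- if the Hausdorff distance between two sets of `k` points is smaller than half
the minimal distance between two distinct points of the first set, then it coincides with the
minimal (over permutations) maximal distance of matched points. -/
theorem stmt4 {E : Type*} [MetricSpace E] (k : ℕ) (hk : 0 < k) (a b : Fin k → E)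
    (ha : Function.Injective a) (hb : Function.Injective b)
    (h : hausdorffDist (Set.range a) (Set.range b) <
      (1 / 2) * ⨅ p : {p : Fin k × Fin k // p.1 ≠ p.2}, dist (a p.1.1) (a p.1.2)) :
    hausdorffDist (Set.range a) (Set.range b) =
      ⨅ σ : Equiv.Perm (Fin k), ⨆ j, dist (a j) (b (σ j)) := by
  haveI : Nonempty (Fin k) := ⟨⟨0, hk⟩⟩
  set H := hausdorffDist (Set.range a) (Set.range b) with hH
  have hane : (Set.range a).Nonempty := range_nonempty a
  have hbne : (Set.range b).Nonempty := range_nonempty b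
  have hedist : EMetric.hausdorffEdist (Set.range a) (Set.range b) ≠ ⊤ :=
    hausdorffEdist_ne_top_of_nonempty_of_bounded hane hbne
      (Set.finite_range a).isBounded (Set.finite_range b).isBounded
  -- for each j, pick a closest point of b
  have hclose : ∀ j : Fin k, ∃ i : Fin k, dist (a j) (b i) ≤ H := by
    intro j
    have h1 : infDist (a j) (Set.range b) ≤ H :=
      infDist_le_hausdorffDist_of_mem (mem_range_self j) hedist
    obtain ⟨y, hy, hyd⟩ := (Set.finite_range b).isCompact.exists_infDist_eq_dist hbne (a j)
    obtain ⟨i, rfl⟩ := hy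
    exact ⟨i, by rw [← hyd]; exact h1⟩
  choose f hf using hclose
  have hfinj : Function.Injective f := by
    intro j1 j2 hj
    by_contra hne
    have hle : (⨅ p : {p : Fin k × Fin k // p.1 ≠ p.2}, dist (a p.1.1) (a p.1.2)) ≤
        dist (a j1) (a j2) := by
      have hbd : BddBelow (Set.range fun p : {p : Fin k × Fin k // p.1 ≠ p.2} =>
          dist (a p.1.1) (a p.1.2)) := by
        refine ⟨0, ?_⟩; rintro x ⟨p, rfl⟩; exact dist_nonneg
      exact ciInf_le hbd ⟨(j1, j2), hne⟩
    have : dist (a j1) (a j2) ≤ dist (a j1) (b (f j1)) + dist (b (f j2)) (a j2) := by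
      rw [hj]; exact dist_triangle _ _ _
    have h2 : dist (a j1) (a j2) ≤ 2 * H := by
      have := hf j1
      have h2 := hf j2
      rw [dist_comm] at h2
      linarith [dist_triangle (a j1) (b (f j1)) (a j2), dist_comm (b (f j2)) (a j2)]
    linarith
  have hfbij : Function.Bijective f := (Finite.injective_iff_bijective).1 hfinj
  let σ0 : Equiv.Perm (Fin k) := Equiv.ofBijective f hfbij
  -- lower bound: H ≤ sup for every σ
  have hlow : ∀ σ : Equiv.Perm (Fin k), H ≤ ⨆ j, dist (a j) (b (σ j)) := by
    intro σ
    have hnn : (0:ℝ) ≤ ⨆ j, dist (a j) (b (σ j)) :=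
      Real.iSup_nonneg fun j => dist_nonneg
    have hbdd : BddAbove (Set.range fun j => dist (a j) (b (σ j))) :=
      (Set.finite_range _).bddAbove
    refine hausdorffDist_le_of_mem_dist hnn ?_ ?_
    · rintro x ⟨j, rfl⟩
      exact ⟨b (σ j), mem_range_self _, le_ciSup hbdd j⟩
    · rintro x ⟨i, rfl⟩
      refine ⟨a (σ.symm i), mem_range_self _, ?_⟩
      rw [dist_comm]
      have := le_ciSup hbdd (σ.symm i)
      simpa using this
  -- conclude
  have hbddI : BddBelow (Set.range fun σ : Equiv.Perm (Fin k) => ⨆ j, dist (a j) (b (σ j))) := by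
    refine ⟨0, ?_⟩
    rintro x ⟨σ, rfl⟩
    exact Real.iSup_nonneg fun j => dist_nonneg
  apply le_antisymm
  · exact le_ciInf hlow
  · refine (ciInf_le hbddI σ0).trans ?_
    refine Real.iSup_le (fun j => ?_) (hausdorffDist_nonneg)
    exact hf j
end

section
/- Let c = {c₁,…,c_k} be a set of k distinct points in E, let q be an NN quantizer with codebook c, and set m(c) = min_{i≠j} |c_i − c_j|. For every λ > 0, every x ∈ E with q(x_λ) = q(x), where x_λ = x + λ(x − q(x)), satisfies d(x, 𝔉(c)) ≥ m(c)·λ/(2(1+λ)); in other words, A(λ) is contained in the set of points at distance at least m(c)·λ/(2(1+λ)) from 𝔉(c). -/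
open MeasureTheory Metric Set ENNReal

noncomputable section

variable {E : Type*} [NormedAddCommGroup E] [InnerProductSpace ℝ E] [MeasurableSpace E]

open RealInnerProductSpace in
/-- Key pointwise estimate. -/
lemma stmt6_key {E : Type*} [NormedAddCommGroup E] [InnerProductSpace ℝ E]
    (lam : ℝ) (hlam : 0 < lam) (x ci ca : E) (hne : ci ≠ ca)
    (h1 : ‖x + lam • (x - ci) - ci‖ ≤ ‖x + lam • (x - ci) - ca‖)
    (y : E) (h2 : ‖y - ca‖ ≤ ‖y - ci‖) :
    ‖ci - ca‖ * lam / (2 * (1 + lam)) ≤ dist x y := by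
  have hxl1 : x + lam • (x - ci) - ci = (1 + lam) • (x - ci) := by
    rw [add_smul, one_smul, smul_sub]; abel
  have hxl2 : x + lam • (x - ci) - ca = (1 + lam) • (x - ci) + (ci - ca) := by
    rw [add_smul, one_smul, smul_sub]; abel
  have hyw : y - ca = (y - ci) + (ci - ca) := by abel
  have hwpos : (0:ℝ) < ‖ci - ca‖ := by
    rw [norm_pos_iff, sub_ne_zero]; exact hne
  have e1 := pow_le_pow_left₀ (norm_nonneg _) h1 2
  rw [hxl1, hxl2, norm_add_sq_real, real_inner_smul_left] at e1
  have e1' : 0 ≤ 2 * ((1 + lam) * ⟪x - ci, ci - ca⟫) + ‖ci - ca‖ ^ 2 := by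
    linarith
  have e2 := pow_le_pow_left₀ (norm_nonneg _) h2 2
  rw [hyw, norm_add_sq_real] at e2
  have e2' : 2 * ⟪y - ci, ci - ca⟫ + ‖ci - ca‖ ^ 2 ≤ 0 := by linarith
  have e3 : ⟪x - y, ci - ca⟫ = ⟪x - ci, ci - ca⟫ - ⟪y - ci, ci - ca⟫ := by
    rw [← inner_sub_left]
    congr 1
    abel
  have e4 : ⟪x - y, ci - ca⟫ ≤ ‖x - y‖ * ‖ci - ca‖ := real_inner_le_norm _ _
  have hl1 : (0:ℝ) < 1 + lam := by linarith
  rw [dist_eq_norm, div_le_iff₀ (by linarith : (0:ℝ) < 2 * (1 + lam))]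
  have key : ‖ci - ca‖ ^ 2 * lam ≤ ‖x - y‖ * ‖ci - ca‖ * (2 * (1 + lam)) := by
    nlinarith [e1', e2', e3, e4]
  nlinarith [hwpos, key]


/-- points whose image under `q` is unchanged after inflation by `λ` are at distance
at least `m(c)·λ/(2(1+λ))` from the frontier of the Voronoi diagram (Remark `lem:l0`, part 2). -/
theorem stmt6 [BorelSpace E] [CompleteSpace E] [SecondCountableTopology E]
    (k : ℕ) (c : Fin k → E) (hc_inj : Function.Injective c)
    (q : E → E) (hq : IsNNQuantizer k q) (hrange : Set.range q = Set.range c)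
    (lam : ℝ) (hlam : 0 < lam)
    (x : E) (hx : q (x + lam • (x - q x)) = q x) :
    minDist k c * lam / (2 * (1 + lam)) ≤ infDist x (VorFrontier k c) := by
  by_cases hpair : Nonempty {p : Fin k × Fin k // p.1 ≠ p.2}
  swap
  · -- no pair: minDist = 0
    rw [not_nonempty_iff] at hpair
    have : minDist k c = 0 := Real.iInf_of_isEmpty _
    rw [this, zero_mul, zero_div]
    exact infDist_nonneg
  -- pick index i with c i = q x
  obtain ⟨i, hi⟩ : q x ∈ Set.range c := hrange ▸ Set.mem_range_self x
  -- nearest-point property for x_lam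
  have hnear : ∀ l : Fin k,
      ‖x + lam • (x - c i) - c i‖ ≤ ‖x + lam • (x - c i) - c l‖ := by
    intro l
    have hcl : c l ∈ Set.range q := by rw [hrange]; exact Set.mem_range_self l
    have := hq.2.2 (x + lam • (x - q x)) (c l) hcl
    rwa [hx, ← hi] at this
  have hbdd : BddBelow (Set.range fun p : {p : Fin k × Fin k // p.1 ≠ p.2} =>
      ‖c p.1.1 - c p.1.2‖) := by
    refine ⟨0, ?_⟩
    rintro r ⟨p, rfl⟩
    exact norm_nonneg _
  have hmin_le : ∀ (a b : Fin k), a ≠ b → minDist k c ≤ ‖c a - c b‖ := fun a b hab =>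
    ciInf_le hbdd (⟨(a, b), hab⟩ : {p : Fin k × Fin k // p.1 ≠ p.2})
  -- pointwise bound on the frontier
  have hpt : ∀ y ∈ VorFrontier k c, minDist k c * lam / (2 * (1 + lam)) ≤ dist x y := by
    intro y hy
    simp only [VorFrontier, Set.mem_iUnion] at hy
    obtain ⟨a, b, hab, hya, hyb⟩ := hy
    -- choose j ∈ {a, b} with j ≠ i
    obtain ⟨j, hji, hyj⟩ : ∃ j : Fin k, j ≠ i ∧ y ∈ Vcell k c j := by
      by_cases hai : a = i
      · exact ⟨b, fun h => hab (hai.trans h.symm), hyb⟩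
      · exact ⟨a, hai, hya⟩
    have h2 : ‖y - c j‖ ≤ ‖y - c i‖ := hyj i
    have hne : c i ≠ c j := fun h => hji (hc_inj h.symm)
    have := stmt6_key lam hlam x (c i) (c j) hne (hnear j) y h2
    calc minDist k c * lam / (2 * (1 + lam))
        ≤ ‖c i - c j‖ * lam / (2 * (1 + lam)) := by
          gcongr
          exact hmin_le i j (fun h => hji h.symm)
      _ ≤ dist x y := this
  -- the frontier is nonempty: midpoint of a closest pair
  obtain ⟨p0, hp0⟩ := Finite.exists_min
    (fun p : {p : Fin k × Fin k // p.1 ≠ p.2} => ‖c p.1.1 - c p.1.2‖)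
  set i0 := p0.1.1
  set j0 := p0.1.2
  have hij0 : i0 ≠ j0 := p0.2
  set d := ‖c i0 - c j0‖ with hd
  set mp := midpoint ℝ (c i0) (c j0) with hmp
  have hmpi : ‖mp - c i0‖ = d / 2 := by
    rw [← dist_eq_norm, dist_midpoint_left, hd, dist_eq_norm]
    norm_num
    ring
  have hmpj : ‖mp - c j0‖ = d / 2 := by
    rw [← dist_eq_norm, dist_midpoint_right, hd, dist_eq_norm]
    norm_num
    ring
  have hcell : ∀ l : Fin k, d / 2 ≤ ‖mp - c l‖ := by
    intro l
    by_cases hli : l = i0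
    · rw [hli, hmpi]
    by_cases hlj : l = j0
    · rw [hlj, hmpj]
    have h1 : d ≤ ‖c i0 - c l‖ := hp0 ⟨(i0, l), fun h => hli h.symm⟩
    have h2 : ‖c i0 - c l‖ ≤ ‖c i0 - mp‖ + ‖mp - c l‖ := by
      calc ‖c i0 - c l‖ = ‖(c i0 - mp) + (mp - c l)‖ := by rw [sub_add_sub_cancel]
        _ ≤ ‖c i0 - mp‖ + ‖mp - c l‖ := norm_add_le _ _
    have h3 : ‖c i0 - mp‖ = d / 2 := by rw [norm_sub_rev]; exact hmpi
    linarith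
  have hmem : mp ∈ VorFrontier k c := by
    simp only [VorFrontier, Set.mem_iUnion]
    refine ⟨i0, j0, hij0, ?_, ?_⟩
    · intro l; rw [hmpi]; exact hcell l
    · intro l; rw [hmpj]; exact hcell l
  -- conclude
  by_contra hcon
  rw [not_le, infDist_lt_iff ⟨mp, hmem⟩] at hcon
  obtain ⟨y, hy, hylt⟩ := hcon
  exact absurd (hpt y hy) (not_le.mpr hylt)
end
end

section
/- Let q⋆ be an optimal k-points NN quantizer for P with codebook c⋆ = {c⋆₁,…,c⋆_k} and set m = min_{i≠j} |c⋆_i − c⋆_j|. Then for every t with 0 < t < m/4 one has P(𝔉(c⋆)ᵗ) ≤ p⋆(2t). -/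
open MeasureTheory Metric Set ENNReal

noncomputable section

variable {E : Type*} [NormedAddCommGroup E] [InnerProductSpace ℝ E] [MeasurableSpace E]

/-! A point `x` within `t` of the Voronoi frontier is within `2t` of a point `y` equidistant from
two centers `cᵢ ≠ cⱼ`; such a `y` lies on the boundary of the cell `Vᵢ`, and
`m ≤ |cᵢ - cⱼ| ≤ 2|y - cᵢ| ≤ 2|y - q⋆(x)| ≤ 2|x - y| + 2|x - q⋆(x)|`. Multiplying by
`d(x, ∂Vᵢ) ≤ |x - y| < 2t` gives the defining inequality of `p⋆(2t)` at `x`. -/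

section Voronoi

variable {X : Type*} [NormedAddCommGroup X] {k : ℕ} {c : Fin k → X}

theorem minDist_le {i j : Fin k} (hij : i ≠ j) : minDist k c ≤ ‖c i - c j‖ :=
  ciInf_le (f := fun p : {p : Fin k × Fin k // p.1 ≠ p.2} => ‖c p.1.1 - c p.1.2‖)
    ⟨0, by rintro r ⟨p, rfl⟩; exact norm_nonneg _⟩ ⟨(i, j), hij⟩

theorem exists_ne_of_minDist_pos (h : 0 < minDist k c) : ∃ i j : Fin k, i ≠ j := by
  by_contra! hall
  have : IsEmpty {p : Fin k × Fin k // p.1 ≠ p.2} := ⟨fun p => p.2 (hall _ _)⟩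
  exact h.ne' (Real.iInf_of_isEmpty _)

theorem minDist_nonneg : 0 ≤ minDist k c := Real.iInf_nonneg fun _ => norm_nonneg _

theorem self_mem_vcell (i : Fin k) : c i ∈ Vcell k c i := fun l => by
  simp only [sub_self, norm_zero, norm_nonneg]

theorem isClosed_vcell (i : Fin k) : IsClosed (Vcell k c i) := by
  simp only [Vcell, ofPred_forall]
  exact isClosed_iInter fun l => isClosed_le (by fun_prop) (by fun_prop)

theorem exists_mem_vcell [Nonempty (Fin k)] (x : X) : ∃ l, x ∈ Vcell k c l :=
  Finite.exists_min fun l => ‖x - c l‖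

theorem frontier_vcell_subset_vorFrontier (i : Fin k) :
    frontier (Vcell k c i) ⊆ VorFrontier k c := by
  have : Nonempty (Fin k) := ⟨i⟩
  have hcompl : (Vcell k c i)ᶜ ⊆ ⋃ (l) (_ : l ≠ i), Vcell k c l := fun x hx => by
    obtain ⟨l, hl⟩ := exists_mem_vcell (c := c) x
    exact mem_biUnion (fun h => hx (h ▸ hl)) hl
  have hclosed : IsClosed (⋃ (l) (_ : l ≠ i), Vcell k c l) :=
    isClosed_iUnion_of_finite fun l => isClosed_iUnion_of_finite fun _ => isClosed_vcell l
  intro y hy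
  rw [frontier_eq_closure_inter_closure, (isClosed_vcell i).closure_eq] at hy
  obtain ⟨l, hli, hyl⟩ := mem_iUnion₂.1 (closure_minimal hcompl hclosed hy.2)
  exact mem_iUnion₂.2 ⟨i, l, mem_iUnion.2 ⟨hli.symm, hy.1, hyl⟩⟩

theorem frontier_vcell_nonempty [PreconnectedSpace X] {i j : Fin k} (hc : c i ≠ c j) :
    (frontier (Vcell k c i)).Nonempty := by
  refine nonempty_frontier_iff.2 ⟨⟨c i, self_mem_vcell i⟩, fun h => ?_⟩
  have := (h ▸ mem_univ (c j) : c j ∈ Vcell k c i) j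
  simp only [sub_self, norm_zero, norm_le_zero_iff, sub_eq_zero] at this
  exact hc this.symm

theorem vorFrontier_nonempty [PreconnectedSpace X] {i j : Fin k} (hc : c i ≠ c j) :
    (VorFrontier k c).Nonempty :=
  (frontier_vcell_nonempty hc).mono (frontier_vcell_subset_vorFrontier i)

theorem minDist_le_two_mul_norm_sub {i j : Fin k} (hij : i ≠ j) {y : X}
    (hyi : y ∈ Vcell k c i) (hyj : y ∈ Vcell k c j) (l : Fin k) :
    minDist k c ≤ 2 * ‖y - c l‖ :=
  calc minDist k c ≤ ‖c i - c j‖ := minDist_le hij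
    _ ≤ ‖y - c i‖ + ‖y - c j‖ := by
      rw [norm_sub_rev y]; exact norm_sub_le_norm_sub_add_norm_sub _ _ _
    _ ≤ 2 * ‖y - c l‖ := by linarith [hyi l, hyj i]

end Voronoi

section Hilbert

open scoped Topology

variable {X : Type*} [NormedAddCommGroup X] [InnerProductSpace ℝ X]

theorem norm_add_smul_sub_lt_of_norm_sub_eq {a b y : X} (hab : a ≠ b)
    (hy : ‖y - a‖ = ‖y - b‖) {s : ℝ} (hs : 0 < s) :
    ‖y + s • (b - a) - b‖ < ‖y + s • (b - a) - a‖ := by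
  have hsq : ‖y + s • (b - a) - a‖ ^ 2 = ‖y + s • (b - a) - b‖ ^ 2 + 2 * s * ‖b - a‖ ^ 2 := by
    rw [add_sub_right_comm, add_sub_right_comm y, norm_add_sq_real, norm_add_sq_real, hy,
      real_inner_smul_right, real_inner_smul_right]
    have : inner ℝ (y - a) (b - a) = inner ℝ (y - b) (b - a) + ‖b - a‖ ^ 2 := by
      rw [← real_inner_self_eq_norm_sq, ← inner_add_left, sub_add_sub_cancel]
    rw [this]; ring
  have : 0 < 2 * s * ‖b - a‖ ^ 2 := by
    have := norm_pos_iff.2 (sub_ne_zero.2 hab.symm)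
    positivity
  exact lt_of_pow_lt_pow_left₀ 2 (norm_nonneg _) (by linarith)

variable {k : ℕ} {c : Fin k → X}

theorem mem_frontier_vcell_of_mem_inter {i j : Fin k} (hc : c i ≠ c j) {y : X}
    (hyi : y ∈ Vcell k c i) (hyj : y ∈ Vcell k c j) : y ∈ frontier (Vcell k c i) := by
  rw [frontier_eq_closure_inter_closure]
  refine ⟨subset_closure hyi, mem_closure_of_tendsto (b := 𝓝[>] (0 : ℝ))
    (f := fun s => y + s • (c j - c i)) ?_ (eventually_nhdsWithin_of_forall fun s hs => ?_)⟩
  · exact tendsto_nhdsWithin_of_tendsto_nhds (Continuous.tendsto' (by fun_prop) _ _ (by simp))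
  · exact fun hmem => (hmem j).not_gt
      (norm_add_smul_sub_lt_of_norm_sub_eq hc (le_antisymm (hyi j) (hyj i)) hs)

theorem exists_minDist_mul_infDist_frontier_le (hc : Function.Injective c) (x : X) {y : X}
    (hy : y ∈ VorFrontier k c) (l : Fin k) :
    ∃ i, minDist k c * infDist x (frontier (Vcell k c i)) ≤
      2 * ‖x - c l‖ * dist x y + 2 * dist x y ^ 2 := by
  simp only [VorFrontier, mem_iUnion, mem_inter_iff] at hy
  obtain ⟨i, j, hij, hyi, hyj⟩ := hy
  have hdist : infDist x (frontier (Vcell k c i)) ≤ dist x y :=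
    infDist_le_dist_of_mem (mem_frontier_vcell_of_mem_inter (hc.ne hij) hyi hyj)
  have hm : minDist k c ≤ 2 * dist x y + 2 * ‖x - c l‖ := by
    linarith [minDist_le_two_mul_norm_sub hij hyi hyj l,
      norm_sub_le_norm_sub_add_norm_sub y x (c l), dist_eq_norm' x y]
  refine ⟨i, ?_⟩
  calc minDist k c * infDist x (frontier (Vcell k c i))
      ≤ minDist k c * dist x y := mul_le_mul_of_nonneg_left hdist minDist_nonneg
    _ ≤ (2 * dist x y + 2 * ‖x - c l‖) * dist x y := mul_le_mul_of_nonneg_right hm dist_nonneg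
    _ = 2 * ‖x - c l‖ * dist x y + 2 * dist x y ^ 2 := by ring

end Hilbert

theorem stmt10_general
    (P : Measure E) [IsProbabilityMeasure P] (k : ℕ)
    (qs : E → E) (cs : Fin k → E)
    (hcs_inj : Function.Injective cs) (hcs_range : Set.range qs = Set.range cs)
    (t : ℝ) (ht : 0 < t) (htm : t < minDist k cs / 4) :
    (P {x | infDist x (VorFrontier k cs) ≤ t}).toReal ≤ pstar P k cs qs (2 * t) := by
  obtain ⟨i₀, j₀, hij₀⟩ := exists_ne_of_minDist_pos (c := cs) (by linarith)
  have hF := vorFrontier_nonempty (hcs_inj.ne hij₀)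
  refine ENNReal.toReal_mono (measure_ne_top _ _) (measure_mono fun x hx => ?_)
  obtain ⟨y, hyF, hxy⟩ := (infDist_lt_iff hF).1 (lt_of_le_of_lt hx (by linarith : t < 2 * t))
  obtain ⟨l, hl⟩ : qs x ∈ range cs := hcs_range ▸ mem_range_self x
  obtain ⟨i, hi⟩ := exists_minDist_mul_infDist_frontier_le hcs_inj x hyF l
  refine mem_iUnion.2 ⟨i, hi.trans ?_⟩
  rw [hl]
  gcongr

/-- `p(t) ≤ p⋆(2t)` for `0 < t < m/4` (Subsection `sub:comp`). -/
theorem stmt10 [BorelSpace E] [CompleteSpace E] [SecondCountableTopology E]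
    (P : Measure E) [IsProbabilityMeasure P] (k : ℕ) (hk : 1 ≤ k)
    (hmom : Integrable (fun x => ‖x‖ ^ 2) P)
    (hsupp : ∀ s : Finset E, s.card ≤ k → P (↑s : Set E) < 1)
    (qs : E → E) (cs : Fin k → E)
    (hcs_inj : Function.Injective cs) (hcs_range : Set.range qs = Set.range cs)
    (hqs : IsOptimalQuantizer P k qs)
    (t : ℝ) (ht : 0 < t) (htm : t < minDist k cs / 4) :
    (P {x | infDist x (VorFrontier k cs) ≤ t}).toReal ≤ pstar P k cs qs (2 * t) :=
  stmt10_general P k qs cs hcs_inj hcs_range t ht htm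
end
end

section
/- Let q⋆ be an optimal k-points NN quantizer for P with codebook c⋆ = {c⋆₁,…,c⋆_k} and set m = min_{i≠j} |c⋆_i − c⋆_j|. Suppose the support of P and the codebook c⋆ are both contained in a closed ball of diameter R > 0. Then for every t > 0 one has p⋆(t) ≤ P(𝔉(c⋆)^{(2Rt + 2t²)/m}). -/
open MeasureTheory Metric Set ENNReal

noncomputable section

variable {E : Type*} [NormedAddCommGroup E] [InnerProductSpace ℝ E] [MeasurableSpace E]

/-- when the support of `P` and the optimal codebook lie in a closed ball of
diameter `R`, `p⋆(t) ≤ p((2Rt + 2t²)/m)` (Subsection `sub:comp`). -/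
theorem stmt11 [BorelSpace E] [CompleteSpace E] [SecondCountableTopology E]
    (P : Measure E) [IsProbabilityMeasure P] (k : ℕ) (hk : 1 ≤ k)
    (hmom : Integrable (fun x => ‖x‖ ^ 2) P)
    (hsupp : ∀ s : Finset E, s.card ≤ k → P (↑s : Set E) < 1)
    (qs : E → E) (cs : Fin k → E)
    (hcs_inj : Function.Injective cs) (hcs_range : Set.range qs = Set.range cs)
    (hqs : IsOptimalQuantizer P k qs)
    (R : ℝ) (hR : 0 < R)
    (hball : ∃ z : E, P (closedBall z (R / 2)) = 1 ∧ Set.range cs ⊆ closedBall z (R / 2))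
    (t : ℝ) (ht : 0 < t) :
    pstar P k cs qs t ≤
      (P {x | infDist x (VorFrontier k cs) ≤ (2 * R * t + 2 * t ^ 2) / minDist k cs}).toReal := by
  obtain ⟨z, hPz, hcz⟩ := hball
  -- abbreviations
  set A : Set E := ⋃ i, {x | minDist k cs * infDist x (frontier (Vcell k cs i)) ≤
      2 * ‖x - qs x‖ * t + 2 * t ^ 2} with hA
  rcases eq_or_lt_of_le hk with hk1 | hk2
  · -- k = 1
    have hkk : k = 1 := hk1.symm
    subst hkk
    have hemp : IsEmpty {p : Fin 1 × Fin 1 // p.1 ≠ p.2} :=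
      ⟨fun p => p.2 (Subsingleton.elim _ _)⟩
    have hm0 : minDist 1 cs = 0 := by
      rw [minDist]; exact Real.iInf_of_isEmpty _
    have hVF : VorFrontier 1 cs = ∅ := by
      rw [VorFrontier, Set.eq_empty_iff_forall_notMem]
      intro x hx
      simp only [Set.mem_iUnion] at hx
      obtain ⟨i, j, hij, -⟩ := hx
      exact hij (Subsingleton.elim i j)
    have hset : {x : E | infDist x (VorFrontier 1 cs) ≤
        (2 * R * t + 2 * t ^ 2) / minDist 1 cs} = Set.univ := by
      ext x
      simp [hVF, hm0, Metric.infDist_empty]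
    rw [hset]
    unfold pstar
    exact ENNReal.toReal_mono (measure_ne_top _ _) (measure_mono (Set.subset_univ _))
  · -- 2 ≤ k
    have hmpos : 0 < minDist k cs := by
      have hne : Nonempty {p : Fin k × Fin k // p.1 ≠ p.2} := by
        refine ⟨⟨(⟨0, by omega⟩, ⟨1, hk2⟩), ?_⟩⟩
        simp [Fin.ext_iff]
      obtain ⟨p0, hp0⟩ := Finite.exists_min
        (fun p : {p : Fin k × Fin k // p.1 ≠ p.2} => ‖cs p.1.1 - cs p.1.2‖)
      have h1 : 0 < ‖cs p0.1.1 - cs p0.1.2‖ := by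
        rw [norm_pos_iff, sub_ne_zero]
        exact fun h => p0.2 (hcs_inj h)
      have h2 : ‖cs p0.1.1 - cs p0.1.2‖ ≤ minDist k cs := le_ciInf hp0
      linarith
    have hVclosed : ∀ i, IsClosed (Vcell k cs i) := by
      intro i
      have : Vcell k cs i = ⋂ l, {x | ‖x - cs i‖ ≤ ‖x - cs l‖} := by
        ext x; simp [Vcell, Set.mem_iInter]
      rw [this]
      exact isClosed_iInter fun l => isClosed_le
        ((continuous_id.sub continuous_const).norm) ((continuous_id.sub continuous_const).norm)
    have hfr_sub : ∀ i, frontier (Vcell k cs i) ⊆ VorFrontier k cs := by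
      intro i x hx
      have hxcl : x ∈ closure (Vcell k cs i) := hx.1
      have hxV : x ∈ Vcell k cs i := by rwa [(hVclosed i).closure_eq] at hxcl
      have hxnint : x ∉ interior (Vcell k cs i) := hx.2
      have hex : ∃ j, j ≠ i ∧ ‖x - cs j‖ ≤ ‖x - cs i‖ := by
        by_contra h
        push_neg at h
        apply hxnint
        have hU : IsOpen (⋂ j ∈ Finset.univ.erase i, {y : E | ‖y - cs i‖ < ‖y - cs j‖}) := by
          refine isOpen_biInter_finset fun j _ => ?_
          exact isOpen_lt ((continuous_id.sub continuous_const).norm)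
            ((continuous_id.sub continuous_const).norm)
        refine interior_maximal ?_ hU ?_
        · intro y hy l
          rcases eq_or_ne l i with rfl | hl
          · exact le_rfl
          · exact le_of_lt (Set.mem_iInter₂.1 hy l (Finset.mem_erase.2 ⟨hl, Finset.mem_univ _⟩))
        · exact Set.mem_iInter₂.2 fun j hj => h j (Finset.ne_of_mem_erase hj)
      obtain ⟨j, hji, hjle⟩ := hex
      have hxVj : x ∈ Vcell k cs j := by
        intro l
        exact le_trans hjle (hxV l)
      rw [VorFrontier]
      exact Set.mem_iUnion.2 ⟨i, Set.mem_iUnion.2 ⟨j, Set.mem_iUnion.2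
        ⟨fun h => hji h.symm, hxV, hxVj⟩⟩⟩
    have hfr_ne : ∀ i, (frontier (Vcell k cs i)).Nonempty := by
      intro i
      by_contra h
      rw [Set.not_nonempty_iff_eq_empty] at h
      have hclopen : IsClopen (Vcell k cs i) := isClopen_iff_frontier_eq_empty.2 h
      rcases isClopen_iff.1 hclopen with he | hu
      · have : cs i ∈ Vcell k cs i := fun l => by simp
        rw [he] at this
        exact this
      · have hnt : Nontrivial (Fin k) := ⟨⟨0, by omega⟩, ⟨1, hk2⟩, by simp [Fin.ext_iff]⟩
        obtain ⟨j, hj⟩ := exists_ne i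
        have : cs j ∈ Vcell k cs i := hu ▸ Set.mem_univ _
        have h0 : ‖cs j - cs i‖ ≤ ‖cs j - cs j‖ := this j
        simp only [sub_self, norm_zero] at h0
        have : cs j = cs i := by
          rw [← sub_eq_zero]
          exact norm_le_zero_iff.1 h0
        exact hj (hcs_inj this)
    -- main inclusion
    have key : closedBall z (R / 2) ∩ A ⊆
        {x | infDist x (VorFrontier k cs) ≤ (2 * R * t + 2 * t ^ 2) / minDist k cs} := by
      rintro x ⟨hxB, hxA⟩
      obtain ⟨i, hxi⟩ := Set.mem_iUnion.1 hxA
      have hqx : ‖x - qs x‖ ≤ R := by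
        have h1 : qs x ∈ Set.range cs := hcs_range ▸ Set.mem_range_self x
        have h2 : qs x ∈ closedBall z (R / 2) := hcz h1
        have := dist_triangle x z (qs x)
        rw [mem_closedBall] at hxB h2
        rw [dist_comm] at h2
        calc ‖x - qs x‖ = dist x (qs x) := (dist_eq_norm _ _).symm
          _ ≤ dist x z + dist z (qs x) := dist_triangle _ _ _
          _ ≤ R / 2 + R / 2 := add_le_add hxB h2
          _ = R := by ring
      have hd1 : minDist k cs * infDist x (frontier (Vcell k cs i)) ≤
          2 * R * t + 2 * t ^ 2 := by
        refine le_trans hxi ?_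
        have : 2 * ‖x - qs x‖ * t ≤ 2 * R * t := by nlinarith
        linarith
      have hd2 : infDist x (frontier (Vcell k cs i)) ≤
          (2 * R * t + 2 * t ^ 2) / minDist k cs := by
        rw [le_div_iff₀ hmpos, mul_comm]
        exact hd1
      exact le_trans (infDist_le_infDist_of_subset (hfr_sub i) (hfr_ne i)) hd2
    -- measure argument
    have hcompl : P (closedBall z (R / 2))ᶜ = 0 := by
      rw [measure_compl measurableSet_closedBall (measure_ne_top _ _), hPz,
        measure_univ, tsub_self]
    have hPA : P A ≤ P {x | infDist x (VorFrontier k cs) ≤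
        (2 * R * t + 2 * t ^ 2) / minDist k cs} := by
      calc P A ≤ P ((closedBall z (R / 2) ∩ A) ∪ (closedBall z (R / 2))ᶜ) := by
            refine measure_mono fun x hx => ?_
            by_cases hxB : x ∈ closedBall z (R / 2)
            · exact Or.inl ⟨hxB, hx⟩
            · exact Or.inr hxB
        _ ≤ P (closedBall z (R / 2) ∩ A) + P (closedBall z (R / 2))ᶜ := measure_union_le _ _
        _ = P (closedBall z (R / 2) ∩ A) := by rw [hcompl, add_zero]
        _ ≤ _ := measure_mono key
    unfold pstar
    exact ENNReal.toReal_mono (measure_ne_top _ _) hPA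
end
end

section
/- Let E be a separable Hilbert space over ℝ, let q : E → E be a k-points NN quantizer, let q⋆ : E → E be any map, and let λ > 0. Then for every x ∈ E, writing x_λ = x + λ(x − q⋆(x)), one has |q⋆(x) − q(x)|² ≤ ((1+λ)/λ)·(|x − q(x)|² − |x − q⋆(x)|²) + (1/λ)·(|x_λ − q⋆(x)|² − |x_λ − q(x_λ)|²). -/
/-!
The point `x` lies on the segment from `q⋆ x` to `x_λ`, splitting it in ratio `1 : λ`, so Stewart's
theorem turns the bound into an identity once `‖x_λ - q x_λ‖` is replaced by the larger
`‖x_λ - q x‖`; that replacement is exactly the nearest-neighbour property of `q` at `x_λ`.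
-/

theorem mul_norm_sub_sq_eq_of_extrapolate {E : Type*} [NormedAddCommGroup E]
    [InnerProductSpace ℝ E] (x p c : E) (lam : ℝ) :
    lam * ‖p - c‖ ^ 2 =
      (1 + lam) * (‖x - c‖ ^ 2 - ‖x - p‖ ^ 2) +
        (‖(x + lam • (x - p)) - p‖ ^ 2 - ‖(x + lam • (x - p)) - c‖ ^ 2) := by
  have hpc : p - c = (x - c) - (x - p) := by abel
  have hp : x + lam • (x - p) - p = (1 + lam) • (x - p) := by module
  have hc : x + lam • (x - p) - c = (x - c) + lam • (x - p) := by abel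
  rw [hpc, hp, hc, norm_sub_sq_real, norm_add_sq_real, norm_smul, norm_smul, real_inner_smul_right,
    Real.norm_eq_abs, Real.norm_eq_abs, mul_pow, mul_pow, sq_abs, sq_abs]
  ring

theorem stmt14_general {E : Type*} [NormedAddCommGroup E] [InnerProductSpace ℝ E]
    (q : E → E)
    (hqNN : ∀ x : E, ∀ c ∈ Set.range q, ‖x - q x‖ ≤ ‖x - c‖)
    (qs : E → E) (lam : ℝ) (hlam : 0 < lam) (x : E) :
    ‖qs x - q x‖ ^ 2 ≤
      ((1 + lam) / lam) * (‖x - q x‖ ^ 2 - ‖x - qs x‖ ^ 2) +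
        (1 / lam) * (‖(x + lam • (x - qs x)) - qs x‖ ^ 2 -
          ‖(x + lam • (x - qs x)) - q (x + lam • (x - qs x))‖ ^ 2) := by
  set xl := x + lam • (x - qs x)
  have hNN : ‖xl - q xl‖ ^ 2 ≤ ‖xl - q x‖ ^ 2 := by
    gcongr
    exact hqNN xl (q x) ⟨x, rfl⟩
  have hStewart := mul_norm_sub_sq_eq_of_extrapolate x (qs x) (q x) lam
  calc ‖qs x - q x‖ ^ 2
      = ((1 + lam) / lam) * (‖x - q x‖ ^ 2 - ‖x - qs x‖ ^ 2) +
          (1 / lam) * (‖xl - qs x‖ ^ 2 - ‖xl - q x‖ ^ 2) := by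
        field_simp
        linarith
    _ ≤ ((1 + lam) / lam) * (‖x - q x‖ ^ 2 - ‖x - qs x‖ ^ 2) +
          (1 / lam) * (‖xl - qs x‖ ^ 2 - ‖xl - q xl‖ ^ 2) := by
        gcongr

/-- the pointwise inequality at the start of the proof of Theorem `thm:absmarg`.
Here `q` is a `k`-points NN quantizer (a map with image a set of exactly `k` points mapping each
point to a nearest point of its image) and `qs` is an arbitrary map. -/
theorem stmt14 {E : Type*} [NormedAddCommGroup E] [InnerProductSpace ℝ E]
    (k : ℕ) (q : E → E)
    (hqim : ∃ s : Finset E, s.card = k ∧ Set.range q = ↑s)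
    (hqNN : ∀ x : E, ∀ c ∈ Set.range q, ‖x - q x‖ ≤ ‖x - c‖)
    (qs : E → E) (lam : ℝ) (hlam : 0 < lam) (x : E) :
    ‖qs x - q x‖ ^ 2 ≤
      ((1 + lam) / lam) * (‖x - q x‖ ^ 2 - ‖x - qs x‖ ^ 2) +
        (1 / lam) * (‖(x + lam • (x - qs x)) - qs x‖ ^ 2 -
          ‖(x + lam • (x - qs x)) - q (x + lam • (x - qs x))‖ ^ 2) :=
  stmt14_general q hqNN qs lam hlam x
end

section
/- Let E be a separable Hilbert space over ℝ, let k ≥ 1 be an integer, and let Q be a Borel probability measure on E with ∫|x|² dQ(x) < ∞ whose support is contained in a closed ball. Then there exists a finite set c = {c₁,…,c_k} ⊆ E of at most k points attaining the infimum of c ↦ ∫ min_{1≤j≤k} |x − c_j|² dQ(x) over all sets of at most k points of E. -/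
/-!
A centre farther than `2 r` from `z` is farther from every point of `closedBall z r` than `z`
itself, so it suffices to minimise the risk over codebooks in a bounded set. A minimising
sequence there has, by the sequential Banach–Alaoglu theorem in the separable Hilbert space `E`,
a weakly convergent subsequence. The risk is weakly sequentially lower semicontinuous:
`‖x - c‖ ^ 2 ≥ ‖x - c₀‖ ^ 2 + 2 ⟪c₀ - c, x - c₀⟫` bounds each term from below by a quantity
converging to the value at the weak limit `c₀`, and Fatou's lemma passes this to the integral.
Hence the weak limit is a minimiser.
-/

open MeasureTheory Metric Set
open Filter Topology

section WeakCompactness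

variable {E : Type*} [NormedAddCommGroup E] [InnerProductSpace ℝ E] [CompleteSpace E]
  [SecondCountableTopology E]

theorem exists_strictMono_tendsto_inner_of_isBounded {u : ℕ → E}
    (hu : Bornology.IsBounded (range u)) :
    ∃ c : E, ∃ φ : ℕ → ℕ, StrictMono φ ∧
      ∀ y, Tendsto (fun n => inner ℝ (u (φ n)) y) atTop (𝓝 (inner ℝ c y)) := by
  obtain ⟨M, hM⟩ := hu.subset_closedBall 0
  let v : ℕ → WeakDual ℝ E := fun n => StrongDual.toWeakDual (InnerProductSpace.toDual ℝ E (u n))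
  have hv : ∀ n, v n ∈ WeakDual.toStrongDual ⁻¹' closedBall 0 M := fun n => by
    simpa [v] using hM (mem_range_self n)
  obtain ⟨w, -, φ, hφ, hvw⟩ := WeakDual.isSeqCompact_closedBall ℝ E 0 M hv
  refine ⟨(InnerProductSpace.toDual ℝ E).symm (WeakDual.toStrongDual w), φ, hφ, fun y => ?_⟩
  rw [tendsto_iff_forall_eval_tendsto_topDualPairing] at hvw
  rw [InnerProductSpace.toDual_symm_apply]
  exact hvw y

theorem exists_strictMono_tendsto_inner_of_isBounded_pi {ι : Type*} [Fintype ι]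
    {u : ℕ → ι → E} (hu : Bornology.IsBounded (range u)) :
    ∃ c : ι → E, ∃ φ : ℕ → ℕ, StrictMono φ ∧
      ∀ j y, Tendsto (fun n => inner ℝ (u (φ n) j) y) atTop (𝓝 (inner ℝ (c j) y)) := by
  classical
  have hbdd : Bornology.IsBounded (range fun n => WithLp.toLp 2 (u n)) := by
    rw [range_comp' (WithLp.toLp 2) u]
    exact (PiLp.lipschitzWith_toLp 2 fun _ : ι => E).isBounded_image hu
  obtain ⟨c, φ, hφ, hc⟩ := exists_strictMono_tendsto_inner_of_isBounded hbdd
  refine ⟨c.ofLp, φ, hφ, fun j y => ?_⟩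
  simpa [PiLp.inner_apply, Pi.single_apply, apply_ite (inner ℝ _)] using
    hc (WithLp.toLp 2 (Pi.single j y))

end WeakCompactness

section WeakLowerSemicontinuity

variable {ι E : Type*} [NormedAddCommGroup E] [InnerProductSpace ℝ E]

theorem eventually_lt_norm_sub_sq_of_tendsto_inner {u : ℕ → E} {c x : E} {a : ℝ}
    (hu : ∀ y, Tendsto (fun n => inner ℝ (u n) y) atTop (𝓝 (inner ℝ c y)))
    (ha : a < ‖x - c‖ ^ 2) : ∀ᶠ n in atTop, a < ‖x - u n‖ ^ 2 := by
  have hlower : Tendsto (fun n => ‖x - c‖ ^ 2 + 2 * (inner ℝ c (x - c) - inner ℝ (u n) (x - c)))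
      atTop (𝓝 (‖x - c‖ ^ 2)) := by
    simpa using (((hu (x - c)).const_sub (inner ℝ c (x - c))).const_mul 2).const_add (‖x - c‖ ^ 2)
  filter_upwards [hlower.eventually (lt_mem_nhds ha)] with n hn
  have hexpand := norm_add_sq_real (x - c) (c - u n)
  rw [sub_add_sub_cancel, real_inner_comm, inner_sub_left] at hexpand
  nlinarith [sq_nonneg ‖c - u n‖]

theorem eventually_lt_iInf_norm_sub_sq_of_tendsto_inner [Finite ι] [Nonempty ι]
    {u : ℕ → ι → E} {c : ι → E} {x : E} {a : ℝ}
    (hu : ∀ j y, Tendsto (fun n => inner ℝ (u n j) y) atTop (𝓝 (inner ℝ (c j) y)))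
    (ha : a < ⨅ j, ‖x - c j‖ ^ 2) : ∀ᶠ n in atTop, a < ⨅ j, ‖x - u n j‖ ^ 2 := by
  have hj : ∀ j, ∀ᶠ n in atTop, a < ‖x - u n j‖ ^ 2 := fun j =>
    eventually_lt_norm_sub_sq_of_tendsto_inner (hu j)
      (ha.trans_le (ciInf_le (Finite.bddBelow_range _) j))
  filter_upwards [eventually_all.2 hj] with n hn
  obtain ⟨j, hj⟩ := exists_eq_ciInf_of_finite (f := fun j => ‖x - u n j‖ ^ 2)
  exact hj ▸ hn j

theorem ofReal_iInf_norm_sub_sq_le_liminf [Finite ι] [Nonempty ι]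
    {u : ℕ → ι → E} {c : ι → E} (x : E)
    (hu : ∀ j y, Tendsto (fun n => inner ℝ (u n j) y) atTop (𝓝 (inner ℝ (c j) y))) :
    ENNReal.ofReal (⨅ j, ‖x - c j‖ ^ 2) ≤
      liminf (fun n => ENNReal.ofReal (⨅ j, ‖x - u n j‖ ^ 2)) atTop := by
  refine (le_liminf_iff).2 fun y hy => ?_
  have hy' : y.toReal < ⨅ j, ‖x - c j‖ ^ 2 := (ENNReal.lt_ofReal_iff_toReal_lt hy.ne_top).1 hy
  filter_upwards [eventually_lt_iInf_norm_sub_sq_of_tendsto_inner hu hy'] with n hn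
  exact (ENNReal.lt_ofReal_iff_toReal_lt hy.ne_top).2 hn

end WeakLowerSemicontinuity

section Distortion

variable {ι E : Type*} [NormedAddCommGroup E] [MeasurableSpace E]

noncomputable def distortion (Q : Measure E) (c : ι → E) : ℝ :=
  ∫ x, ⨅ j, ‖x - c j‖ ^ 2 ∂Q

theorem distortion_nonneg (Q : Measure E) (c : ι → E) : 0 ≤ distortion Q c :=
  integral_nonneg fun _ => Real.iInf_nonneg fun _ => sq_nonneg _

variable [OpensMeasurableSpace E] {Q : Measure E}

theorem measurable_iInf_norm_sub_sq [Countable ι] (c : ι → E) :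
    Measurable fun x => ⨅ j, ‖x - c j‖ ^ 2 :=
  Measurable.iInf fun _ => ((continuous_id.sub continuous_const).norm.pow 2).measurable

theorem integrable_norm_sub_sq [IsFiniteMeasure Q] (hmom : Integrable (fun x => ‖x‖ ^ 2) Q)
    (c : E) : Integrable (fun x => ‖x - c‖ ^ 2) Q := by
  refine Integrable.mono' (g := fun x => 2 * ‖x‖ ^ 2 + 2 * ‖c‖ ^ 2)
    ((hmom.const_mul 2).add (integrable_const _))
    ((continuous_id.sub continuous_const).norm.pow 2).aestronglyMeasurable
    (Eventually.of_forall fun x => ?_)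
  rw [Real.norm_of_nonneg (sq_nonneg _)]
  nlinarith [norm_sub_le x c, norm_nonneg (x - c), sq_nonneg (‖x‖ - ‖c‖)]

theorem integrable_iInf_norm_sub_sq [Finite ι] [Nonempty ι] [IsFiniteMeasure Q]
    (hmom : Integrable (fun x => ‖x‖ ^ 2) Q) (c : ι → E) :
    Integrable (fun x => ⨅ j, ‖x - c j‖ ^ 2) Q := by
  obtain ⟨j⟩ := ‹Nonempty ι›
  refine (integrable_norm_sub_sq hmom (c j)).mono'
    (measurable_iInf_norm_sub_sq c).aestronglyMeasurable (Eventually.of_forall fun x => ?_)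
  rw [Real.norm_of_nonneg (Real.iInf_nonneg fun _ => sq_nonneg _)]
  exact ciInf_le (Finite.bddBelow_range _) j

theorem distortion_le_of_tendsto_inner [InnerProductSpace ℝ E] [Finite ι] [Nonempty ι]
    [IsFiniteMeasure Q] (hmom : Integrable (fun x => ‖x‖ ^ 2) Q)
    {u : ℕ → ι → E} {c : ι → E} {d : ℝ}
    (hu : ∀ j y, Tendsto (fun n => inner ℝ (u n j) y) atTop (𝓝 (inner ℝ (c j) y)))
    (hd : Tendsto (fun n => distortion Q (u n)) atTop (𝓝 d)) :
    distortion Q c ≤ d := by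
  have hofReal : ∀ c : ι → E, ENNReal.ofReal (distortion Q c) =
      ∫⁻ x, ENNReal.ofReal (⨅ j, ‖x - c j‖ ^ 2) ∂Q := fun c =>
    ofReal_integral_eq_lintegral_ofReal (integrable_iInf_norm_sub_sq hmom c)
      (Eventually.of_forall fun _ => Real.iInf_nonneg fun _ => sq_nonneg _)
  have hd0 : 0 ≤ d := ge_of_tendsto' hd fun n => distortion_nonneg Q (u n)
  rw [← ENNReal.ofReal_le_ofReal_iff hd0]
  calc ENNReal.ofReal (distortion Q c)
      ≤ ∫⁻ x, liminf (fun n => ENNReal.ofReal (⨅ j, ‖x - u n j‖ ^ 2)) atTop ∂Q := by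
        rw [hofReal]
        exact lintegral_mono fun x => ofReal_iInf_norm_sub_sq_le_liminf x hu
    _ ≤ liminf (fun n => ENNReal.ofReal (distortion Q (u n))) atTop := by
        simp_rw [hofReal]
        exact lintegral_liminf_le fun n => (measurable_iInf_norm_sub_sq (u n)).ennreal_ofReal
    _ = ENNReal.ofReal d := ((ENNReal.continuous_ofReal.tendsto d).comp hd).liminf_eq

theorem dist_le_dist_of_mem_closedBall_of_lt {X : Type*} [PseudoMetricSpace X] {x z c : X}
    {r : ℝ} (hx : x ∈ closedBall z r) (hc : 2 * r < dist c z) : dist x z ≤ dist x c := by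
  rw [mem_closedBall] at hx
  linarith [dist_triangle c x z, dist_comm x c]

theorem exists_mem_closedBall_distortion_le [Fintype ι] [Nonempty ι] [IsFiniteMeasure Q]
    (hmom : Integrable (fun x => ‖x‖ ^ 2) Q) {z : E} {r : ℝ} (hr : 0 ≤ r)
    (hQ : ∀ᵐ x ∂Q, x ∈ closedBall z r) (c : ι → E) :
    ∃ c' ∈ closedBall (fun _ : ι => z) (2 * r), distortion Q c' ≤ distortion Q c := by
  classical
  set c' : ι → E := fun j => if dist (c j) z ≤ 2 * r then c j else z
  refine ⟨c', (dist_pi_le_iff (by positivity)).2 fun j => ?_, ?_⟩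
  · by_cases h : dist (c j) z ≤ 2 * r <;> simp [c', h, hr]
  · refine integral_mono_of_nonneg
      (Eventually.of_forall fun _ => Real.iInf_nonneg fun _ => sq_nonneg _)
      (integrable_iInf_norm_sub_sq hmom c) ?_
    filter_upwards [hQ] with x hx
    refine ciInf_mono (Finite.bddBelow_range _) fun j => ?_
    by_cases h : dist (c j) z ≤ 2 * r
    · simp [c', h]
    · simp only [c', h, if_false, ← dist_eq_norm]
      exact pow_le_pow_left₀ dist_nonneg
        (dist_le_dist_of_mem_closedBall_of_lt hx (not_le.1 h)) 2

theorem exists_forall_distortion_le_of_isBounded [InnerProductSpace ℝ E] [CompleteSpace E]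
    [SecondCountableTopology E] [Fintype ι] [Nonempty ι] [IsFiniteMeasure Q]
    (hmom : Integrable (fun x => ‖x‖ ^ 2) Q) {K : Set (ι → E)} (hK : K.Nonempty)
    (hKb : Bornology.IsBounded K) :
    ∃ c : ι → E, ∀ c' ∈ K, distortion Q c ≤ distortion Q c' := by
  have hbdd : BddBelow (distortion Q '' K) :=
    ⟨0, forall_mem_image.2 fun c _ => distortion_nonneg Q c⟩
  obtain ⟨d, -, hd, hdK⟩ := exists_seq_tendsto_sInf (hK.image _) hbdd
  choose u huK hud using hdK
  obtain ⟨c, φ, hφ, hc⟩ :=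
    exists_strictMono_tendsto_inner_of_isBounded_pi (hKb.subset (range_subset_iff.2 huK))
  refine ⟨c, fun c' hc' => (distortion_le_of_tendsto_inner hmom hc ?_).trans
    (csInf_le hbdd (mem_image_of_mem _ hc'))⟩
  simpa only [Function.comp_def, hud] using hd.comp hφ.tendsto_atTop

end Distortion

/-- existence of an optimal codebook of at most `k` points for a probability
measure with finite second moment whose support is contained in a closed ball
(Lemma `lem:cont` (1), after Theorem 4.12 in Graf–Luschgy). -/
theorem stmt15 {E : Type*} [NormedAddCommGroup E] [InnerProductSpace ℝ E]
    [CompleteSpace E] [SecondCountableTopology E] [MeasurableSpace E] [BorelSpace E]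
    (k : ℕ) (hk : 0 < k) (Q : Measure E) [IsProbabilityMeasure Q]
    (hmom : Integrable (fun x => ‖x‖ ^ 2) Q)
    (hball : ∃ z : E, ∃ r : ℝ, Q (closedBall z r) = 1) :
    ∃ c : Fin k → E, ∀ c' : Fin k → E,
      ∫ x, (⨅ j, ‖x - c j‖ ^ 2) ∂Q ≤ ∫ x, (⨅ j, ‖x - c' j‖ ^ 2) ∂Q := by
  obtain ⟨z, r, hQ⟩ := hball
  have hr : 0 ≤ r :=
    (nonempty_closedBall (x := z)).1 (nonempty_of_measure_ne_zero (μ := Q) (by simp [hQ]))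
  have hae : ∀ᵐ x ∂Q, x ∈ closedBall z r :=
    (ae_mem_iff_measure_eq measurableSet_closedBall.nullMeasurableSet).2 (by simp [hQ])
  have : Nonempty (Fin k) := ⟨⟨0, hk⟩⟩
  obtain ⟨c, hc⟩ := exists_forall_distortion_le_of_isBounded hmom
    (K := closedBall (fun _ : Fin k => z) (2 * r)) (nonempty_closedBall.2 (by positivity))
    isBounded_closedBall
  refine ⟨c, fun c' => ?_⟩
  obtain ⟨c'', hc'', hle⟩ := exists_mem_closedBall_distortion_le hmom hr hae c'
  exact (hc c'' hc'').trans hle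
end

section
/- Let (𝒳, 𝒜) be a measurable space, let (X,Y) be a random pair with X taking values in 𝒳 and Y in ℝ, and let μ be the law of X. Let ℓ : ℝ × ℝ → [0,∞) be such that for every y ∈ ℝ the map u ↦ ℓ(y,u) is α-strongly convex for some α > 0 (i.e., u ↦ ℓ(y,u) − (α/2)u² is convex). Let T be a convex set of measurable functions t : 𝒳 → ℝ, each square-integrable with respect to μ and with finite risk R(t) = E[ℓ(Y, t(X))]. If t⋆ ∈ T minimizes R over T, then for every t ∈ T, ∫ (t(x) − t⋆(x))² dμ(x) ≤ (4/α)·(R(t) − R(t⋆)). -/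
open MeasureTheory

/-!
Strong convexity of `u ↦ ℓ(y, u)` gives, pointwise and then after integration, that the risk of
the midpoint `m = (t + t⋆)/2` lies below the average of `R(t)` and `R(t⋆)` by
`α/8 · ‖t - t⋆‖²`.
Since `m ∈ T` and `t⋆` minimizes `R` on `T`, `R(t⋆) ≤ R(m)`, which rearranges to the claim.
-/

theorem ConvexOn.midpoint_le_of_sub_sq {f : ℝ → ℝ} {α : ℝ}
    (hf : ConvexOn ℝ Set.univ fun u => f u - α / 2 * u ^ 2) (a b : ℝ) :
    f (1 / 2 * a + 1 / 2 * b) ≤ 1 / 2 * f a + 1 / 2 * f b - α / 8 * (a - b) ^ 2 := by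
  have h := hf.2 (Set.mem_univ a) (Set.mem_univ b) (by norm_num : (0 : ℝ) ≤ 1 / 2)
    (by norm_num : (0 : ℝ) ≤ 1 / 2) (by norm_num)
  simp only [smul_eq_mul] at h
  linarith

theorem Convex.le_of_isMinOn_of_midpoint_le {E : Type*} [AddCommGroup E] [Module ℝ E]
    {T : Set E} (hT : Convex ℝ T) {R : E → ℝ} {s t : E} (hs : s ∈ T) (ht : t ∈ T)
    (hmin : IsMinOn R T s) {α d : ℝ} (hα : 0 < α)
    (hmid : R ((1 / 2 : ℝ) • t + (1 / 2 : ℝ) • s) ≤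
      1 / 2 * R t + 1 / 2 * R s - α / 8 * d) :
    d ≤ 4 / α * (R t - R s) := by
  have hsm : R s ≤ R ((1 / 2 : ℝ) • t + (1 / 2 : ℝ) • s) :=
    hmin (hT ht hs (by norm_num) (by norm_num) (by norm_num))
  rw [div_mul_eq_mul_div, le_div_iff₀ hα]
  linarith

theorem integral_midpoint_le_of_convexOn_sub_sq {Ω : Type*} [MeasurableSpace Ω]
    {ν : Measure Ω} {f : Ω → ℝ → ℝ} {α : ℝ}
    (hf : ∀ ω, ConvexOn ℝ Set.univ fun u => f ω u - α / 2 * u ^ 2) {u v : Ω → ℝ}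
    (hu : Integrable (fun ω => f ω (u ω)) ν) (hv : Integrable (fun ω => f ω (v ω)) ν)
    (hm : Integrable (fun ω => f ω (1 / 2 * u ω + 1 / 2 * v ω)) ν)
    (hsq : Integrable (fun ω => (u ω - v ω) ^ 2) ν) :
    ∫ ω, f ω (1 / 2 * u ω + 1 / 2 * v ω) ∂ν ≤
      1 / 2 * ∫ ω, f ω (u ω) ∂ν + 1 / 2 * ∫ ω, f ω (v ω) ∂ν
        - α / 8 * ∫ ω, (u ω - v ω) ^ 2 ∂ν := by
  have hu' := hu.const_mul (1 / 2)
  have hv' := hv.const_mul (1 / 2)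
  have hsq' := hsq.const_mul (α / 8)
  have hsum : Integrable (fun ω => 1 / 2 * f ω (u ω) + 1 / 2 * f ω (v ω)) ν := hu'.add hv'
  calc ∫ ω, f ω (1 / 2 * u ω + 1 / 2 * v ω) ∂ν
      ≤ ∫ ω, (1 / 2 * f ω (u ω) + 1 / 2 * f ω (v ω) - α / 8 * (u ω - v ω) ^ 2) ∂ν :=
        integral_mono hm (hsum.sub hsq') fun ω => (hf ω).midpoint_le_of_sub_sq (u ω) (v ω)
    _ = _ := by
        rw [integral_sub hsum hsq', integral_add hu' hv',
          integral_const_mul, integral_const_mul, integral_const_mul]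

theorem stmt17_general {𝒳 : Type*} [MeasurableSpace 𝒳]
    (ν : Measure (𝒳 × ℝ))
    (ℓ : ℝ → ℝ → ℝ)
    (α : ℝ) (hα : 0 < α)
    (hconv : ∀ y : ℝ, ConvexOn ℝ Set.univ fun u => ℓ y u - α / 2 * u ^ 2)
    (T : Set (𝒳 → ℝ)) (hT : Convex ℝ T)
    (hL2 : ∀ t ∈ T, MemLp t 2 (ν.map Prod.fst))
    (hint : ∀ t ∈ T, Integrable (fun p => ℓ p.2 (t p.1)) ν)
    (ts : 𝒳 → ℝ) (hts : ts ∈ T)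
    (hmin : ∀ t ∈ T, ∫ p, ℓ p.2 (ts p.1) ∂ν ≤ ∫ p, ℓ p.2 (t p.1) ∂ν)
    (t : 𝒳 → ℝ) (ht : t ∈ T) :
    ∫ x, (t x - ts x) ^ 2 ∂(ν.map Prod.fst) ≤
      (4 / α) * (∫ p, ℓ p.2 (t p.1) ∂ν - ∫ p, ℓ p.2 (ts p.1) ∂ν) := by
  have hsq : Integrable (fun x => (t x - ts x) ^ 2) (ν.map Prod.fst) :=
    ((hL2 t ht).sub (hL2 ts hts)).integrable_sq
  have hm : (1 / 2 : ℝ) • t + (1 / 2 : ℝ) • ts ∈ T :=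
    hT ht hts (by norm_num) (by norm_num) (by norm_num)
  rw [integral_map measurable_fst.aemeasurable hsq.aestronglyMeasurable]
  refine hT.le_of_isMinOn_of_midpoint_le (R := fun u => ∫ p, ℓ p.2 (u p.1) ∂ν)
    hts ht hmin hα ?_
  exact integral_midpoint_le_of_convexOn_sub_sq (f := fun p : 𝒳 × ℝ => ℓ p.2)
    (u := fun p => t p.1) (v := fun p => ts p.1) (fun p => hconv p.2)
    (hint t ht) (hint ts hts) (hint _ hm)
    ((integrable_map_measure hsq.aestronglyMeasurable measurable_fst.aemeasurable).mp hsq)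

/-- stability of supervised learning with an `α`-strongly convex loss.  The random
pair `(X, Y)` is encoded by its joint law `ν` on `𝒳 × ℝ`, and `μ = ν.map Prod.fst` is the law of
`X`.  If `t⋆ ∈ T` minimizes the risk `R(t) = E[ℓ(Y, t(X))]` over the convex class `T`, then the
`L²(μ)` distance from any `t ∈ T` to `t⋆` is controlled by the excess risk. -/
theorem stmt17 {𝒳 : Type*} [MeasurableSpace 𝒳]
    (ν : Measure (𝒳 × ℝ)) [IsProbabilityMeasure ν]
    (ℓ : ℝ → ℝ → ℝ) (hℓ_nonneg : ∀ y u, 0 ≤ ℓ y u)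
    (α : ℝ) (hα : 0 < α)
    (hconv : ∀ y : ℝ, ConvexOn ℝ Set.univ fun u => ℓ y u - α / 2 * u ^ 2)
    (T : Set (𝒳 → ℝ)) (hT : Convex ℝ T)
    (hmeas : ∀ t ∈ T, Measurable t)
    (hL2 : ∀ t ∈ T, MemLp t 2 (ν.map Prod.fst))
    (hint : ∀ t ∈ T, Integrable (fun p => ℓ p.2 (t p.1)) ν)
    (ts : 𝒳 → ℝ) (hts : ts ∈ T)
    (hmin : ∀ t ∈ T, ∫ p, ℓ p.2 (ts p.1) ∂ν ≤ ∫ p, ℓ p.2 (t p.1) ∂ν)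
    (t : 𝒳 → ℝ) (ht : t ∈ T) :
    ∫ x, (t x - ts x) ^ 2 ∂(ν.map Prod.fst) ≤
      (4 / α) * (∫ p, ℓ p.2 (t p.1) ∂ν - ∫ p, ℓ p.2 (ts p.1) ∂ν) :=
  stmt17_general ν ℓ α hα hconv T hT hL2 hint ts hts hmin t ht
end
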